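/- arXiv:2112.05116 — 4 statements merged into one kernel-verified Lean document; each statement's English description precedes it below -/
import Mathlib

section
/- Let u ∈ BV(0,1) be the precise representative and z ∈ H¹₀(0,1) with |z| ≤ 1 everywhere such that |Du| = z·Du. If x₀ ∈ J_u is a jump point of u, then |z(x₀)| = 1; moreover z(x₀) = 1 if u⁺(x₀) > u⁻(x₀), and z(x₀) = -1 if u⁺(x₀) < u⁻(x₀). -/
open MeasureTheory Set Filter Topology

/-- Integral of `g` over `s` against a signed measure `ν`, via its Jordan decomposition. -/
noncomputable def signedSetIntegral (ν : SignedMeasure ℝ) (s : Set ℝ) (g : ℝ → ℝ) : ℝ :=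
  (∫ x in s, g x ∂ν.toJordanDecomposition.posPart) -
    ∫ x in s, g x ∂ν.toJordanDecomposition.negPart

/-!
At a jump point the identity `|Du| = z·Du`, tested on the atom `{x₀}`, reads
`|Du|({x₀}) = z(x₀) (u⁺ - u⁻)(x₀)`. Since `|Du({x₀})| ≤ |Du|({x₀})` and `|z| ≤ 1`, this forces
`z(x₀) (u⁺ - u⁻)(x₀) = |u⁺ - u⁻|(x₀) ≠ 0`, i.e. `z(x₀) = sign (u⁺ - u⁻)(x₀)`.
-/

theorem signedSetIntegral_singleton (ν : SignedMeasure ℝ) (x : ℝ) (g : ℝ → ℝ) :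
    signedSetIntegral ν {x} g = g x * ν {x} := by
  rw [signedSetIntegral, integral_singleton, integral_singleton,
    ν.apply_eq_posPart_real_sub_negPart_real (measurableSet_singleton x)]
  simp only [smul_eq_mul]
  ring

theorem eq_sign_of_abs_le_mul {a c : ℝ} (hc : |c| ≤ 1) (ha : a ≠ 0) (h : |a| ≤ c * a) :
    c = SignType.sign a := by
  obtain ⟨hc₁, hc₂⟩ := abs_le.mp hc
  rcases ha.lt_or_gt with hneg | hpos
  · rw [abs_of_neg hneg] at h
    rw [sign_neg hneg, SignType.coe_neg_one]
    nlinarith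
  · rw [abs_of_pos hpos] at h
    rw [sign_pos hpos, SignType.coe_one]
    nlinarith

theorem stmt5_general (z : ℝ → ℝ) (ν : SignedMeasure ℝ) (x₀ l r : ℝ)
    (hx₀ : x₀ ∈ Ioo (0:ℝ) 1)
    (hzb : ∀ x, |z x| ≤ 1)
    (hzDu : ∀ s : Set ℝ, MeasurableSet s → s ⊆ Ioo 0 1 →
      (ν.totalVariation s).toReal = signedSetIntegral ν s z)
    (hlr : l ≠ r)
    (hjump : ν {x₀} = r - l) :
    |z x₀| = 1 ∧ (l < r → z x₀ = 1) ∧ (r < l → z x₀ = -1) := by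
  have hatom : ν.totalVariation.real {x₀} = z x₀ * (r - l) := by
    rw [measureReal_def, hzDu {x₀} (measurableSet_singleton x₀) (singleton_subset_iff.mpr hx₀),
      signedSetIntegral_singleton, hjump]
  have hsign : z x₀ = SignType.sign (r - l) := by
    refine eq_sign_of_abs_le_mul (hzb x₀) (sub_ne_zero.mpr hlr.symm) ?_
    rw [← hatom, ← hjump, ← Real.norm_eq_abs]
    exact ν.norm_le_totalVariation {x₀}
  have hup : l < r → z x₀ = 1 := fun hlt ↦ by
    rw [hsign, sign_pos (sub_pos.mpr hlt), SignType.coe_one]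
  have hdown : r < l → z x₀ = -1 := fun hlt ↦ by
    rw [hsign, sign_neg (sub_neg.mpr hlt), SignType.coe_neg_one]
  refine ⟨?_, hup, hdown⟩
  rcases hlr.lt_or_gt with hlt | hlt
  · rw [hup hlt, abs_one]
  · rw [hdown hlt, abs_neg, abs_one]

/-- Let `u ∈ BV(0,1)` (precise representative) with derivative measure `ν = Du`,
and `z ∈ H¹₀(0,1)` continuous with `|z| ≤ 1` everywhere and `|Du| = z·Du`. If `x₀` is a jump
point of `u` with left limit `l = u⁻(x₀)` and right limit `r = u⁺(x₀)`, `l ≠ r`, then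
`|z(x₀)| = 1`; moreover `z(x₀) = 1` if `r > l` and `z(x₀) = -1` if `r < l`. -/
theorem stmt5 (u z : ℝ → ℝ) (ν : SignedMeasure ℝ) (x₀ l r : ℝ)
    (hx₀ : x₀ ∈ Ioo (0:ℝ) 1)
    (hu : BoundedVariationOn u (Ioo 0 1))
    (hν : ∀ φ : ℝ → ℝ, ContDiff ℝ 1 φ → HasCompactSupport φ → tsupport φ ⊆ Ioo 0 1 →
      ∫ x in Ioo (0:ℝ) 1, u x * deriv φ x = - signedSetIntegral ν (Ioo 0 1) φ)
    (hzc : Continuous z) (hz0 : z 0 = 0) (hz1 : z 1 = 0)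
    (hzb : ∀ x, |z x| ≤ 1)
    (hzDu : ∀ s : Set ℝ, MeasurableSet s → s ⊆ Ioo 0 1 →
      (ν.totalVariation s).toReal = signedSetIntegral ν s z)
    (hl : Tendsto u (𝓝[<] x₀) (𝓝 l)) (hr : Tendsto u (𝓝[>] x₀) (𝓝 r))
    (hlr : l ≠ r)
    (hjump : ν {x₀} = r - l) :
    |z x₀| = 1 ∧ (l < r → z x₀ = 1) ∧ (r < l → z x₀ = -1) :=
  stmt5_general z ν x₀ l r hx₀ hzb hzDu hlr hjump
end

section
/- Let λ > 0, ε > 0, Ω = (0,1), and let (u, v₁, v₂) be a minimizer of the functional F_ε. If ε < 1/(4λ), then v₁ and v₂ are constant functions. -/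
/-!
Compare the minimizer `(u, v₁, v₂)` with `(u, c, v₂)`, where `c` is the value of `v₁` at some
point `x₀`, clamped to `[0, 1]`. Since `u` and `f` take values in `[0, 1]`, the fidelity integrand
grows at each `x` by at most `2 |v₁ x₀ - v₁ x| ≤ 2 TV(v₁)`, so minimality gives
`TV(v₁) / ε ≤ 2 λ TV(v₁)`, which forces `TV(v₁) = 0` once `2 λ ε < 1`. The statement for `v₂`
follows from the symmetry `F_ε(1 - u, v₂, v₁) = F_ε(u, v₁, v₂)`.
-/

open scoped ENNReal
open MeasureTheory Set

/-- The augmented Lagrangian functional `F_ε` on `(0,1)`: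
total variation of `u`, plus `(1/ε)` times the total variations of `v₁, v₂`, plus the
fidelity term `λ∫ u(v₁-f)² + (1-u)(v₂-f)²`, plus the convex indicator `∫ 𝕀_{[0,1]}(u)`. -/
noncomputable def Feps1 (lam ε : ℝ) (f u v1 v2 : ℝ → ℝ) : ℝ≥0∞ :=
  eVariationOn u (Ioo 0 1)
    + ENNReal.ofReal (1 / ε) * (eVariationOn v1 (Ioo 0 1) + eVariationOn v2 (Ioo 0 1))
    + ENNReal.ofReal lam * ∫⁻ x in Ioo (0:ℝ) 1,
        ENNReal.ofReal (u x * (v1 x - f x) ^ 2 + (1 - u x) * (v2 x - f x) ^ 2)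
    + ∫⁻ x in Ioo (0:ℝ) 1, (if u x ∈ Icc (0:ℝ) 1 then 0 else ⊤)

lemma mul_sq_projIcc_sub_le {a b f g : ℝ} (hf : f ∈ Icc (0:ℝ) 1) (hg : g ∈ Icc (0:ℝ) 1) :
    g * ((projIcc 0 1 zero_le_one a : ℝ) - f) ^ 2 ≤ g * (b - f) ^ 2 + 2 * |a - b| := by
  set c : ℝ := (projIcc 0 1 zero_le_one a : ℝ)
  set w : ℝ := (projIcc 0 1 zero_le_one b : ℝ)
  have hc : c ∈ Icc (0:ℝ) 1 := Subtype.mem _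
  have hw : w ∈ Icc (0:ℝ) 1 := Subtype.mem _
  have hcw : |c - w| ≤ |a - b| := abs_projIcc_sub_projIcc zero_le_one
  have hwf : |w - f| ≤ |b - f| := by
    simpa [projIcc_of_mem zero_le_one hf] using
      (abs_projIcc_sub_projIcc (c := b) (d := f) (zero_le_one' ℝ))
  -- `(c - f)² - (w - f)² = (c - w)(c + w - 2f)` and `|c + w - 2f| ≤ 2` on the unit interval
  have hcf : (c - f) ^ 2 ≤ (w - f) ^ 2 + 2 * |c - w| := by
    have hsum : |c + w - 2 * f| ≤ 2 :=
      abs_le.2 ⟨by linarith [hc.1, hw.1, hf.2], by linarith [hc.2, hw.2, hf.1]⟩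
    have := abs_mul (c - w) (c + w - 2 * f)
    nlinarith [le_abs_self ((c - w) * (c + w - 2 * f)), abs_nonneg (c - w)]
  have hwb : (w - f) ^ 2 ≤ (b - f) ^ 2 := sq_le_sq.2 hwf
  nlinarith [hg.1, hg.2, abs_nonneg (a - b)]

lemma eVariationOn_const_sub {α : Type*} [LinearOrder α] (u : α → ℝ) (r : ℝ) (s : Set α) :
    eVariationOn (fun x => r - u x) s = eVariationOn u s := by
  simp only [eVariationOn, edist_sub_left]

lemma eVariationOn_const {α : Type*} [LinearOrder α] (c : ℝ) (s : Set α) :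
    eVariationOn (fun _ : α => c) s = 0 :=
  eVariationOn.constant_on (by rintro _ ⟨x, -, rfl⟩ _ ⟨y, -, rfl⟩; rfl)

lemma ae_mem_of_lintegral_ite_ne_top {α β : Type*} [MeasurableSpace α] [MeasurableSpace β]
    {μ : Measure α} {u : α → β} (hu : AEMeasurable u μ) {S : Set β} [DecidablePred (· ∈ S)]
    (hS : MeasurableSet S) (h : ∫⁻ x, (if u x ∈ S then 0 else ∞) ∂μ ≠ ∞) :
    ∀ᵐ x ∂μ, u x ∈ S := by
  have hmeas : Measurable fun t : β => if t ∈ S then (0 : ℝ≥0∞) else ∞ :=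
    Measurable.ite hS measurable_const measurable_const
  filter_upwards [ae_lt_top' (hmeas.comp_aemeasurable hu) h] with x hx
  by_contra hxS
  simp [if_neg hxS] at hx

section ClampToConstant

variable {μ : Measure ℝ} [IsProbabilityMeasure μ] {s : Set ℝ}

-- The constant is the value of `v` at a point of `s`, clamped to `[0, 1]`.
lemma exists_lintegral_const_le (hs : s.Nonempty) (hμs : ∀ᵐ x ∂μ, x ∈ s)
    {Φ : ℝ → ℝ → ℝ}
    (hΦ : ∀ᵐ x ∂μ, ∀ a b, Φ x (projIcc 0 1 zero_le_one a) ≤ Φ x b + 2 * |a - b|) (v : ℝ → ℝ) :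
    ∃ c : ℝ, ∫⁻ x, .ofReal (Φ x c) ∂μ
      ≤ ∫⁻ x, .ofReal (Φ x (v x)) ∂μ + 2 * eVariationOn v s := by
  obtain ⟨x₀, hx₀⟩ := hs
  refine ⟨projIcc 0 1 zero_le_one (v x₀), ?_⟩
  calc ∫⁻ x, .ofReal (Φ x (projIcc 0 1 zero_le_one (v x₀))) ∂μ
      ≤ ∫⁻ x, (.ofReal (Φ x (v x)) + 2 * eVariationOn v s) ∂μ := by
        refine lintegral_mono_ae ?_
        filter_upwards [hμs, hΦ] with x hx hΦx
        calc ENNReal.ofReal (Φ x (projIcc 0 1 zero_le_one (v x₀)))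
            ≤ .ofReal (Φ x (v x)) + .ofReal (2 * |v x₀ - v x|) :=
              (ENNReal.ofReal_le_ofReal (hΦx _ _)).trans ENNReal.ofReal_add_le
          _ = .ofReal (Φ x (v x)) + 2 * edist (v x₀) (v x) := by
              rw [ENNReal.ofReal_mul zero_le_two, edist_dist, Real.dist_eq, ENNReal.ofReal_ofNat]
          _ ≤ .ofReal (Φ x (v x)) + 2 * eVariationOn v s := by
              gcongr
              exact eVariationOn.edist_le v hx₀ hx
    _ = ∫⁻ x, .ofReal (Φ x (v x)) ∂μ + 2 * eVariationOn v s := by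
        rw [lintegral_add_right _ measurable_const, lintegral_const, measure_univ, mul_one]

lemma exists_forall_eq_of_forall_le_const (hs : s.Nonempty) (hμs : ∀ᵐ x ∂μ, x ∈ s)
    {Φ : ℝ → ℝ → ℝ}
    (hΦ : ∀ᵐ x ∂μ, ∀ a b, Φ x (projIcc 0 1 zero_le_one a) ≤ Φ x b + 2 * |a - b|)
    {a b : ℝ≥0∞} (hab : 2 * b < a) {v : ℝ → ℝ}
    (hfin : a * eVariationOn v s + b * ∫⁻ x, .ofReal (Φ x (v x)) ∂μ ≠ ∞)
    (hle : ∀ c : ℝ, a * eVariationOn v s + b * ∫⁻ x, .ofReal (Φ x (v x)) ∂μ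
      ≤ b * ∫⁻ x, .ofReal (Φ x c) ∂μ) :
    ∃ c, ∀ x ∈ s, v x = c := by
  set V := eVariationOn v s
  set I := ∫⁻ x, .ofReal (Φ x (v x)) ∂μ
  obtain ⟨haV, hbI⟩ := ENNReal.add_ne_top.1 hfin
  have hV : V ≠ ∞ := fun h => haV (by rw [h, ENNReal.mul_top (pos_of_gt hab).ne'])
  obtain ⟨c, hc⟩ := exists_lintegral_const_le hs hμs hΦ v
  have haV_le : a * V ≤ 2 * b * V := by
    refine (ENNReal.add_le_add_iff_left hbI).1 ?_
    calc b * I + a * V = a * V + b * I := add_comm _ _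
      _ ≤ b * (I + 2 * V) := (hle c).trans (mul_le_mul_right hc b)
      _ = b * I + 2 * b * V := by ring
  have hV0 : V = 0 := by
    by_contra hV0
    exact (ENNReal.mul_lt_mul_iff_left hV0 hV |>.2 hab).not_ge haV_le
  obtain ⟨x₀, hx₀⟩ := hs
  exact ⟨v x₀, fun x hx => edist_eq_zero.1 ((eVariationOn.eq_zero_iff v).1 hV0 x hx x₀ hx₀)⟩

end ClampToConstant

section Feps1

variable {lam ε : ℝ} {f : ℝ → ℝ}

/- In `Feps1` the binder of the fidelity integral extends over the trailing `+ ∫⁻ …`, so the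
indicator term enters as `λ · |Ioo 0 1| · ∫⁻ 𝕀_{[0,1]}(u)`. -/
lemma Feps1_eq_add (u v1 v2 : ℝ → ℝ) :
    Feps1 lam ε f u v1 v2 =
      (eVariationOn u (Ioo 0 1) + .ofReal (1 / ε) * eVariationOn v2 (Ioo 0 1)
        + .ofReal lam * ∫⁻ x in Ioo (0:ℝ) 1, (if u x ∈ Icc (0:ℝ) 1 then 0 else ⊤))
      + (.ofReal (1 / ε) * eVariationOn v1 (Ioo 0 1)
        + .ofReal lam * ∫⁻ x in Ioo (0:ℝ) 1,
          .ofReal (u x * (v1 x - f x) ^ 2 + (1 - u x) * (v2 x - f x) ^ 2)) := by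
  rw [Feps1, lintegral_add_right _ measurable_const, setLIntegral_const, Real.volume_Ioo,
    sub_zero, ENNReal.ofReal_one, mul_one]
  ring

lemma Feps1_one_sub (u v1 v2 : ℝ → ℝ) :
    Feps1 lam ε f (fun x => 1 - u x) v2 v1 = Feps1 lam ε f u v1 v2 := by
  have hfid : ∀ x, (1 - u x) * (v2 x - f x) ^ 2 + (1 - (1 - u x)) * (v1 x - f x) ^ 2
      = u x * (v1 x - f x) ^ 2 + (1 - u x) * (v2 x - f x) ^ 2 := fun x => by ring
  have hind : ∀ x, (1 - u x ∈ Icc (0:ℝ) 1) ↔ u x ∈ Icc (0:ℝ) 1 := fun x => by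
    simp only [mem_Icc, sub_nonneg, sub_le_self_iff, and_comm]
  simp only [Feps1, eVariationOn_const_sub, hfid, hind, add_comm (eVariationOn v2 _)]

lemma Feps1_const_ne_top (hf01 : ∀ᵐ x ∂(volume.restrict (Ioo (0:ℝ) 1)), f x ∈ Icc (0:ℝ) 1) :
    Feps1 lam ε f (fun _ => 0) (fun _ => 0) (fun _ => 0) ≠ ∞ := by
  have hfid : ∫⁻ x in Ioo (0:ℝ) 1,
      .ofReal (0 * (0 - f x) ^ 2 + (1 - 0) * (0 - f x) ^ 2) ≤ ∫⁻ _ in Ioo (0:ℝ) 1, 1 := by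
    refine lintegral_mono_ae (hf01.mono fun x hx => ?_)
    rw [← ENNReal.ofReal_one]
    exact ENNReal.ofReal_le_ofReal (by nlinarith [hx.1, hx.2])
  simp only [Feps1, eVariationOn_const, mul_zero, zero_add, add_zero, mem_Icc, le_refl, zero_le_one,
    and_self, if_true, lintegral_zero]
  exact ENNReal.mul_ne_top ENNReal.ofReal_ne_top
    (ne_top_of_le_ne_top (by simp [Real.volume_Ioo]) hfid)

end Feps1

lemma exists_ae_eq_const_of_isMinimizer {lam ε : ℝ} (hlam : 0 < lam)
    (hab : 2 * ENNReal.ofReal lam < .ofReal (1 / ε)) {f u v1 v2 : ℝ → ℝ}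
    (hf01 : ∀ᵐ x ∂(volume.restrict (Ioo (0:ℝ) 1)), f x ∈ Icc (0:ℝ) 1)
    (hu : MemLp u 2 (volume.restrict (Ioo (0:ℝ) 1)))
    (hv2 : MemLp v2 2 (volume.restrict (Ioo (0:ℝ) 1)))
    (hmin : ∀ u' v1' v2' : ℝ → ℝ,
      MemLp u' 2 (volume.restrict (Ioo (0:ℝ) 1)) →
      MemLp v1' 2 (volume.restrict (Ioo (0:ℝ) 1)) →
      MemLp v2' 2 (volume.restrict (Ioo (0:ℝ) 1)) →
      Feps1 lam ε f u v1 v2 ≤ Feps1 lam ε f u' v1' v2') :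
    ∃ c : ℝ, ∀ᵐ x ∂(volume.restrict (Ioo (0:ℝ) 1)), v1 x = c := by
  have : IsProbabilityMeasure (volume.restrict (Ioo (0:ℝ) 1)) :=
    ⟨by simp [Real.volume_Ioo]⟩
  have hfin := ne_top_of_le_ne_top (Feps1_const_ne_top hf01)
    (hmin _ _ _ (memLp_const 0) (memLp_const 0) (memLp_const 0))
  rw [Feps1_eq_add] at hfin
  obtain ⟨hrest, hslot⟩ := ENNReal.add_ne_top.1 hfin
  have hu01 : ∀ᵐ x ∂(volume.restrict (Ioo (0:ℝ) 1)), u x ∈ Icc (0:ℝ) 1 := by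
    refine ae_mem_of_lintegral_ite_ne_top hu.aestronglyMeasurable.aemeasurable measurableSet_Icc
      fun hJ => (ENNReal.add_ne_top.1 hrest).2 ?_
    rw [hJ, ENNReal.mul_top (ENNReal.ofReal_pos.2 hlam).ne']
  have hle : ∀ c : ℝ, .ofReal (1 / ε) * eVariationOn v1 (Ioo 0 1)
        + .ofReal lam * ∫⁻ x in Ioo (0:ℝ) 1,
          .ofReal (u x * (v1 x - f x) ^ 2 + (1 - u x) * (v2 x - f x) ^ 2)
      ≤ .ofReal lam * ∫⁻ x in Ioo (0:ℝ) 1,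
          .ofReal (u x * (c - f x) ^ 2 + (1 - u x) * (v2 x - f x) ^ 2) := fun c => by
    have h := hmin u (fun _ => c) v2 hu (memLp_const c) hv2
    rw [Feps1_eq_add, Feps1_eq_add, eVariationOn_const, mul_zero, zero_add] at h
    exact (ENNReal.add_le_add_iff_left hrest).1 h
  have hΦ : ∀ᵐ x ∂(volume.restrict (Ioo (0:ℝ) 1)), ∀ a b : ℝ,
      u x * ((projIcc 0 1 zero_le_one a : ℝ) - f x) ^ 2 + (1 - u x) * (v2 x - f x) ^ 2
        ≤ u x * (b - f x) ^ 2 + (1 - u x) * (v2 x - f x) ^ 2 + 2 * |a - b| := by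
    filter_upwards [hf01, hu01] with x hfx hux a b
    linarith [mul_sq_projIcc_sub_le (a := a) (b := b) hfx hux]
  obtain ⟨c, hc⟩ := exists_forall_eq_of_forall_le_const (nonempty_Ioo.2 zero_lt_one)
    (ae_restrict_mem measurableSet_Ioo) hΦ hab hslot hle
  exact ⟨c, ae_restrict_of_forall_mem measurableSet_Ioo hc⟩

theorem stmt6_general (lam ε : ℝ) (hlam : 0 < lam) (hε : 0 < ε) (hεsmall : ε < 1 / (4 * lam))
    (f u v1 v2 : ℝ → ℝ)
    (hf01 : ∀ᵐ x ∂(volume.restrict (Ioo (0:ℝ) 1)), f x ∈ Icc (0:ℝ) 1)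
    (hu : MemLp u 2 (volume.restrict (Ioo (0:ℝ) 1)))
    (hv1 : MemLp v1 2 (volume.restrict (Ioo (0:ℝ) 1)))
    (hv2 : MemLp v2 2 (volume.restrict (Ioo (0:ℝ) 1)))
    (hmin : ∀ u' v1' v2' : ℝ → ℝ,
      MemLp u' 2 (volume.restrict (Ioo (0:ℝ) 1)) →
      MemLp v1' 2 (volume.restrict (Ioo (0:ℝ) 1)) →
      MemLp v2' 2 (volume.restrict (Ioo (0:ℝ) 1)) →
      Feps1 lam ε f u v1 v2 ≤ Feps1 lam ε f u' v1' v2') :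
    (∃ c : ℝ, ∀ᵐ x ∂(volume.restrict (Ioo (0:ℝ) 1)), v1 x = c) ∧
      (∃ c : ℝ, ∀ᵐ x ∂(volume.restrict (Ioo (0:ℝ) 1)), v2 x = c) := by
  have hab : 2 * ENNReal.ofReal lam < .ofReal (1 / ε) := by
    rw [← ENNReal.ofReal_ofNat, ← ENNReal.ofReal_mul zero_le_two,
      ENNReal.ofReal_lt_ofReal_iff (by positivity), lt_div_iff₀ hε]
    rw [lt_div_iff₀ (by positivity)] at hεsmall
    nlinarith
  refine ⟨exists_ae_eq_const_of_isMinimizer hlam hab hf01 hu hv2 hmin,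
    exists_ae_eq_const_of_isMinimizer (u := fun x => 1 - u x) hlam hab hf01
      ((memLp_const 1).sub hu) hv1 fun u' v1' v2' hu' hv1' hv2' => ?_⟩
  rw [Feps1_one_sub, ← Feps1_one_sub u']
  exact hmin _ _ _ ((memLp_const 1).sub hu') hv2' hv1'

/-- Theorem 1: if `ε < 1/(4λ)` and `(u, v₁, v₂)` minimizes `F_ε` over
`(L²(0,1))³`, then `v₁` and `v₂` are constant functions. -/
theorem stmt6 (lam ε : ℝ) (hlam : 0 < lam) (hε : 0 < ε) (hεsmall : ε < 1 / (4 * lam))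
    (f u v1 v2 : ℝ → ℝ)
    (hfBV : BoundedVariationOn f (Ioo 0 1))
    (hf01 : ∀ᵐ x ∂(volume.restrict (Ioo (0:ℝ) 1)), f x ∈ Icc (0:ℝ) 1)
    (hu : MemLp u 2 (volume.restrict (Ioo (0:ℝ) 1)))
    (hv1 : MemLp v1 2 (volume.restrict (Ioo (0:ℝ) 1)))
    (hv2 : MemLp v2 2 (volume.restrict (Ioo (0:ℝ) 1)))
    (hmin : ∀ u' v1' v2' : ℝ → ℝ,
      MemLp u' 2 (volume.restrict (Ioo (0:ℝ) 1)) →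
      MemLp v1' 2 (volume.restrict (Ioo (0:ℝ) 1)) →
      MemLp v2' 2 (volume.restrict (Ioo (0:ℝ) 1)) →
      Feps1 lam ε f u v1 v2 ≤ Feps1 lam ε f u' v1' v2') :
    (∃ c : ℝ, ∀ᵐ x ∂(volume.restrict (Ioo (0:ℝ) 1)), v1 x = c) ∧
      (∃ c : ℝ, ∀ᵐ x ∂(volume.restrict (Ioo (0:ℝ) 1)), v2 x = c) :=
  stmt6_general lam ε hlam hε hεsmall f u v1 v2 hf01 hu hv1 hv2 hmin
end

section
/- Let h : ℝ → ℝ be a C¹ nondecreasing Lipschitz function and u ∈ BV(0,1) ∩ L²(0,1). Suppose v ∈ L²(0,1) belongs to the subdifferential at u of the total variation functional Φ (so that v = -z' for some z ∈ H¹₀(0,1) with |z| ≤ 1 a.e. and |Du| = z·Du). Then ⟨v, h(u)⟩_{L²} = |D(h(u))|((0,1)). -/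
open scoped ENNReal NNReal
open MeasureTheory Set

/-!
Test the subgradient inequality with `w = u ± ε h(u)`. The `+` sign and subadditivity of the
variation give `ε ⟨v, h(u)⟩ ≤ |D(u + ε h(u))| - |Du| ≤ ε |D(h(u))|`. For `ε K ≤ 1` the map
`t ↦ t - ε h(t)` is nondecreasing, like `ε h`, so `u - ε h(u)` and `ε h(u)` have increments of
the same sign and their variations add up to that of `u`; hence the `-` sign gives
`ε ⟨v, h(u)⟩ ≥ |Du| - |D(u - ε h(u))| = ε |D(h(u))|`.
-/

theorem edist_add_add_of_mul_nonneg {a b c d : ℝ} (h : 0 ≤ (a - c) * (b - d)) :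
    edist (a + b) (c + d) = edist a c + edist b d := by
  rw [edist_dist, edist_dist, edist_dist, Real.dist_eq, Real.dist_eq, Real.dist_eq,
    ← ENNReal.ofReal_add (abs_nonneg _) (abs_nonneg _), add_sub_add_comm]
  exact congrArg ENNReal.ofReal ((abs_add_eq_add_abs_iff _ _).2
    (nonneg_and_nonneg_or_nonpos_and_nonpos_of_mul_nonneg h))

namespace eVariationOn

variable {α : Type*} [LinearOrder α]

theorem add_le {E : Type*} [SeminormedAddCommGroup E] (f g : α → E) (s : Set α) :
    eVariationOn (f + g) s ≤ eVariationOn f s + eVariationOn g s :=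
  iSup_le fun ⟨n, u, hu, us⟩ =>
    calc ∑ i ∈ Finset.range n, edist ((f + g) (u (i + 1))) ((f + g) (u i))
        ≤ ∑ i ∈ Finset.range n,
            (edist (f (u (i + 1))) (f (u i)) + edist (g (u (i + 1))) (g (u i))) :=
          Finset.sum_le_sum fun _ _ => edist_add_add_le _ _ _ _
      _ ≤ eVariationOn f s + eVariationOn g s := by
          rw [Finset.sum_add_distrib]
          exact add_le_add (sum_le hu us) (sum_le hu us)

theorem const_smul {𝕜 E : Type*} [NormedField 𝕜] [SeminormedAddCommGroup E] [NormedSpace 𝕜 E]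
    (c : 𝕜) (f : α → E) (s : Set α) :
    eVariationOn (c • f) s = ‖c‖ₑ * eVariationOn f s := by
  simp only [eVariationOn, ENNReal.mul_iSup, Finset.mul_sum, Pi.smul_apply, edist_smul₀,
    ENNReal.smul_def, smul_eq_mul, enorm_eq_nnnorm]

theorem insert_of_isGreatest {E : Type*} [PseudoEMetricSpace E] (f : α → E) {s : Set α}
    {x a : α} (hx : IsGreatest s x) (hxa : x ≤ a) :
    eVariationOn f (insert a s) = eVariationOn f s + edist (f x) (f a) := by
  have : insert a s = s ∪ {x, a} := by
    rw [union_insert, union_singleton, insert_eq_of_mem (mem_insert_of_mem a hx.1)]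
  rw [this, union f hx ⟨mem_insert _ _, by simpa using hxa⟩, pair]

section Real

variable {f g : α → ℝ}

theorem add_of_monovaryOn_finset (t : Finset α) (hfg : MonovaryOn f g t) :
    eVariationOn (f + g) t = eVariationOn f t + eVariationOn g t := by
  classical
  induction t using Finset.induction_on_max with
  | empty => simp [eVariationOn.subsingleton]
  | insert a t hta ih =>
    rcases t.eq_empty_or_nonempty with rfl | ht
    · simp [eVariationOn.subsingleton]
    have hmax := t.isGreatest_max' ht
    have hle := (hta _ (t.max'_mem ht)).le
    rw [Finset.coe_insert] at hfg ⊢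
    rw [insert_of_isGreatest _ hmax hle, insert_of_isGreatest _ hmax hle,
      insert_of_isGreatest _ hmax hle, ih (hfg.subset (subset_insert _ _)), Pi.add_apply,
      Pi.add_apply, edist_add_add_of_mul_nonneg, add_add_add_comm]
    exact hfg.sub_mul_sub_nonneg (mem_insert _ _) (mem_insert_of_mem _ (t.max'_mem ht))

theorem add_of_monovaryOn {s : Set α} (hfg : MonovaryOn f g s) :
    eVariationOn (f + g) s = eVariationOn f s + eVariationOn g s := by
  refine le_antisymm (add_le f g s) ?_
  rcases s.eq_empty_or_nonempty with rfl | hs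
  · simp [eVariationOn.subsingleton]
  have := nonempty_monotone_mem hs
  refine ENNReal.iSup_add_iSup_le fun ⟨n, p, hp, hps⟩ ⟨m, q, hq, hqs⟩ => ?_
  classical
  let t : Finset α := (Finset.range (n + 1)).image p ∪ (Finset.range (m + 1)).image q
  have hts : (t : Set α) ⊆ s := by
    simp only [t, Finset.coe_union, Finset.coe_image, union_subset_iff, image_subset_iff]
    exact ⟨fun i _ => hps i, fun i _ => hqs i⟩
  calc ∑ i ∈ Finset.range n, edist (f (p (i + 1))) (f (p i))
        + ∑ i ∈ Finset.range m, edist (g (q (i + 1))) (g (q i))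
      ≤ eVariationOn f t + eVariationOn g t := by
        gcongr
        · exact sum_le_of_monotoneOn_Iic (hp.monotoneOn _) fun i hi =>
            Finset.mem_union_left _ (Finset.mem_image_of_mem p (Finset.mem_range_succ_iff.2 hi))
        · exact sum_le_of_monotoneOn_Iic (hq.monotoneOn _) fun i hi =>
            Finset.mem_union_right _ (Finset.mem_image_of_mem q (Finset.mem_range_succ_iff.2 hi))
    _ = eVariationOn (f + g) t := (add_of_monovaryOn_finset t (hfg.subset hts)).symm
    _ ≤ eVariationOn (f + g) s := mono _ hts

end Real

end eVariationOn

section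

variable {α : Type*} [LinearOrder α] {E : Type*} [SeminormedAddCommGroup E] {f g : α → E}
  {s : Set α}

theorem BoundedVariationOn.add (hf : BoundedVariationOn f s) (hg : BoundedVariationOn g s) :
    BoundedVariationOn (f + g) s :=
  ne_top_of_le_ne_top (ENNReal.add_ne_top.2 ⟨hf, hg⟩) (eVariationOn.add_le f g s)

theorem BoundedVariationOn.eVariationOn_add_toReal_le (hf : BoundedVariationOn f s)
    (hg : BoundedVariationOn g s) :
    (eVariationOn (f + g) s).toReal ≤ (eVariationOn f s).toReal + (eVariationOn g s).toReal := by
  rw [← ENNReal.toReal_add hf hg]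
  exact ENNReal.toReal_mono (ENNReal.add_ne_top.2 ⟨hf, hg⟩) (eVariationOn.add_le f g s)

end

theorem monotone_sub_mul_of_lipschitzWith {h : ℝ → ℝ} {K : ℝ≥0} (hh : LipschitzWith K h)
    {ε : ℝ} (hε : 0 ≤ ε) (hεK : ε * K ≤ 1) : Monotone fun t => t - ε * h t := by
  intro a b hab
  have hdist : |h b - h a| ≤ K * |b - a| := by
    simpa only [Real.dist_eq] using hh.dist_le_mul b a
  rw [abs_of_nonneg (sub_nonneg.2 hab)] at hdist
  nlinarith [le_abs_self (h b - h a), mul_le_mul_of_nonneg_left hdist hε,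
    mul_le_mul_of_nonneg_right hεK (sub_nonneg.2 hab)]

theorem LipschitzWith.comp_memLp_of_isFiniteMeasure {α E F : Type*} [MeasurableSpace α]
    {μ : Measure α} [IsFiniteMeasure μ] [NormedAddCommGroup E] [NormedAddCommGroup F]
    {K : ℝ≥0} {g : E → F} {f : α → E} {p : ℝ≥0∞} (hg : LipschitzWith K g) (hf : MemLp f p μ) :
    MemLp (g ∘ f) p μ := by
  have hg0 : MemLp ((fun y => g y - g 0) ∘ f) p μ :=
    (hg.sub (LipschitzWith.const (g 0))).comp_memLp (sub_self _) hf
  have hsplit : g ∘ f = (fun y => g y - g 0) ∘ f + fun _ => g 0 := by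
    ext; simp
  exact hsplit ▸ hg0.add (memLp_const (g 0))

theorem integral_mul_eq_of_subgradient {α : Type*} [MeasurableSpace α] {μ : Measure α}
    {Φ : (α → ℝ) → ℝ} {u v g : α → ℝ}
    (hadd : Φ u + ∫ x, v x * ((u + g) x - u x) ∂μ ≤ Φ (u + g))
    (hsub : Φ u + ∫ x, v x * ((u - g) x - u x) ∂μ ≤ Φ (u - g))
    (hadd_le : Φ (u + g) ≤ Φ u + Φ g) (hsub_le : Φ (u - g) + Φ g ≤ Φ u) :
    ∫ x, v x * g x ∂μ = Φ g := by
  simp only [Pi.add_apply, Pi.sub_apply, add_sub_cancel_left, sub_sub_cancel_left, mul_neg,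
    integral_neg] at hadd hsub
  linarith

theorem stmt17_general (h : ℝ → ℝ) (hmono : Monotone h)
    (K : ℝ≥0) (hLip : LipschitzWith K h)
    (u v : ℝ → ℝ)
    (hu2 : MemLp u 2 (volume.restrict (Ioo (0:ℝ) 1)))
    (huBV : BoundedVariationOn u (Ioo 0 1))
    (hsub : ∀ w : ℝ → ℝ, MemLp w 2 (volume.restrict (Ioo (0:ℝ) 1)) →
      BoundedVariationOn w (Ioo 0 1) →
      (eVariationOn u (Ioo 0 1)).toReal + ∫ x in Ioo (0:ℝ) 1, v x * (w x - u x)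
        ≤ (eVariationOn w (Ioo 0 1)).toReal) :
    ∫ x in Ioo (0:ℝ) 1, v x * h (u x) = (eVariationOn (fun x => h (u x)) (Ioo 0 1)).toReal := by
  obtain ⟨ε, hε, hεK⟩ : ∃ ε : ℝ, 0 < ε ∧ ε * K ≤ 1 :=
    ⟨(1 + K)⁻¹, by positivity, by rw [inv_mul_le_iff₀ (by positivity)]; linarith⟩
  set g : ℝ → ℝ := ε • (h ∘ u)
  have hVg : eVariationOn g (Ioo 0 1) = ‖ε‖ₑ * eVariationOn (h ∘ u) (Ioo 0 1) :=
    eVariationOn.const_smul ε _ _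
  have hBVhu : BoundedVariationOn (h ∘ u) (Ioo 0 1) := hLip.comp_boundedVariationOn huBV
  have hBVg : BoundedVariationOn g (Ioo 0 1) := by
    rw [BoundedVariationOn, hVg]
    exact ENNReal.mul_ne_top enorm_ne_top hBVhu
  have hg2 : MemLp g 2 (volume.restrict (Ioo (0:ℝ) 1)) :=
    (hLip.comp_memLp_of_isFiniteMeasure hu2).const_smul ε
  have hsplit :
      eVariationOn u (Ioo 0 1) = eVariationOn (u - g) (Ioo 0 1) + eVariationOn g (Ioo 0 1) := by
    have hmv : MonovaryOn (u - g) g (Ioo 0 1) :=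
      (((monotone_sub_mul_of_lipschitzWith hLip hε.le hεK).monovary
        (hmono.const_mul hε.le)).comp_right u).monovaryOn _
    simpa using eVariationOn.add_of_monovaryOn hmv
  have hBVsub : BoundedVariationOn (u - g) (Ioo 0 1) :=
    ne_top_of_le_ne_top huBV (hsplit ▸ le_self_add)
  have key := integral_mul_eq_of_subgradient
    (Φ := fun w => (eVariationOn w (Ioo 0 1)).toReal) (hsub _ (hu2.add hg2) (huBV.add hBVg))
    (hsub _ (hu2.sub hg2) hBVsub) (huBV.eVariationOn_add_toReal_le hBVg)
    (by rw [hsplit, ENNReal.toReal_add hBVsub hBVg])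
  simp only [g, hVg, Pi.smul_apply, Function.comp_apply, smul_eq_mul, mul_left_comm _ ε,
    integral_const_mul, ENNReal.toReal_mul, toReal_enorm, Real.norm_of_nonneg hε.le] at key
  exact mul_left_cancel₀ hε.ne' key

/-- let `h` be a `C¹` nondecreasing Lipschitz function, `u ∈ BV(0,1) ∩ L²(0,1)`,
and let `v ∈ L²(0,1)` belong to the `L²` subdifferential at `u` of the total variation
functional `Φ`. Then `⟨v, h(u)⟩_{L²} = |D(h(u))|((0,1))`. -/
theorem stmt17 (h : ℝ → ℝ) (hC1 : ContDiff ℝ 1 h) (hmono : Monotone h)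
    (K : ℝ≥0) (hLip : LipschitzWith K h)
    (u v : ℝ → ℝ)
    (hu2 : MemLp u 2 (volume.restrict (Ioo (0:ℝ) 1)))
    (huBV : BoundedVariationOn u (Ioo 0 1))
    (hv2 : MemLp v 2 (volume.restrict (Ioo (0:ℝ) 1)))
    (hsub : ∀ w : ℝ → ℝ, MemLp w 2 (volume.restrict (Ioo (0:ℝ) 1)) →
      BoundedVariationOn w (Ioo 0 1) →
      (eVariationOn u (Ioo 0 1)).toReal + ∫ x in Ioo (0:ℝ) 1, v x * (w x - u x)
        ≤ (eVariationOn w (Ioo 0 1)).toReal) :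
    ∫ x in Ioo (0:ℝ) 1, v x * h (u x) = (eVariationOn (fun x => h (u x)) (Ioo 0 1)).toReal :=
  stmt17_general h hmono K hLip u v hu2 huBV hsub
end

section
/- Let f ∈ BV(0,1) with 0 ≤ f ≤ 1, satisfying that for every c ∈ (0,1) the topological boundary of the level set {x ∈ (0,1)∖J_f : f(x) = c} has zero Lebesgue measure. Let λ > 0 and let (u, c₁, c₂) be a minimizer of F(u,c₁,c₂) = |Du|((0,1)) + ∫₀¹𝕀_{[0,1]}(u) dx + λ∫₀¹[u(c₁-f)² + (1-u)(c₂-f)²] dx. Then either u is constant or u takes only the values 0 and 1 a.e. (u is a binary BV function). -/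
/-!
After clamping, a minimizer `u` takes its values in `[0,1]`. If `c₁ = c₂` the fidelity term does
not depend on `u`, so minimality forces `|Du| = 0`. Otherwise the fidelity term is affine in `u`:
by the layer-cake formula it is the average over `t ∈ (0,1)` of its values at the indicators
`1_{u > t}`, while the coarea inequality `∫₀¹ |D 1_{u > t}| dt ≤ |Du|` controls the variation. As
every `1_{u > t}` is a competitor, almost every one of them is again a minimizer. Minimality in the
constants then makes `c₁` the mean of `f` on `{u > t}` and `c₂` its mean on `{u ≤ t}`; for two such
levels `t₁ < t₂` this gives `(c₁ - c₂) |{t₁ < u ≤ t₂}| = 0`, and letting `t₁ → 0`, `t₂ → 1` shows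
that `u` is binary.

For the pointwise variation the coarea inequality comes from differentiating the monotone function
`t ↦ |D min(u, t)|`: truncating at a level splits the variation super-additively, so its difference
quotients dominate the variations of `n (min(u, t + 1/n) - min(u, t)) → 1_{u > t}`.
-/

open scoped ENNReal NNReal
open MeasureTheory Set

/-- The one-dimensional Chan--Vese type functional
`F(u,c₁,c₂) = |Du|((0,1)) + ∫ 𝕀_{[0,1]}(u) + λ∫ u(c₁-f)² + (1-u)(c₂-f)²`. -/
noncomputable def Fcv (lam : ℝ) (f : ℝ → ℝ) (u : ℝ → ℝ) (c₁ c₂ : ℝ) : ℝ≥0∞ :=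
  eVariationOn u (Ioo 0 1)
    + (∫⁻ x in Ioo (0:ℝ) 1, (if u x ∈ Icc (0:ℝ) 1 then 0 else ⊤))
    + ENNReal.ofReal lam * ∫⁻ x in Ioo (0:ℝ) 1,
        ENNReal.ofReal (u x * (c₁ - f x) ^ 2 + (1 - u x) * (c₂ - f x) ^ 2)

open Filter Topology

local notation "μ₀₁" => volume.restrict (Ioo (0 : ℝ) 1)

lemma norm_le_one_of_mem_Icc {a : ℝ} (ha : a ∈ Icc (0 : ℝ) 1) : ‖a‖ ≤ 1 := by
  rw [Real.norm_of_nonneg ha.1]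
  exact ha.2

lemma memLp_of_ae_mem_Icc {X : Type*} [MeasurableSpace X] {μ : Measure X} [IsFiniteMeasure μ]
    {v : X → ℝ} (p : ℝ≥0∞) (hv : AEMeasurable v μ) (hv01 : ∀ᵐ x ∂μ, v x ∈ Icc (0 : ℝ) 1) :
    MemLp v p μ :=
  MemLp.of_bound hv.aestronglyMeasurable 1 (hv01.mono fun _ ↦ norm_le_one_of_mem_Icc)

noncomputable def superlevelIndicator {α : Type*} (w : α → ℝ) (t : ℝ) : α → ℝ :=
  {x | t < w x}.indicator 1

lemma superlevelIndicator_mem_Icc {α : Type*} (w : α → ℝ) (t : ℝ) (x : α) :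
    superlevelIndicator w t x ∈ Icc (0 : ℝ) 1 := by
  unfold superlevelIndicator
  by_cases hx : t < w x <;> simp [hx, indicator_of_mem, indicator_of_notMem]

lemma AEMeasurable.superlevelIndicator {X : Type*} [MeasurableSpace X] {μ : Measure X}
    {w : X → ℝ} (hw : AEMeasurable w μ) (t : ℝ) : AEMeasurable (superlevelIndicator w t) μ :=
  (measurable_one.indicator measurableSet_Ioi).comp_aemeasurable hw

lemma memLp_superlevelIndicator {X : Type*} [MeasurableSpace X] {μ : Measure X}
    [IsFiniteMeasure μ] {w : X → ℝ} (p : ℝ≥0∞) (hw : AEMeasurable w μ) (t : ℝ) :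
    MemLp (superlevelIndicator w t) p μ :=
  memLp_of_ae_mem_Icc p (hw.superlevelIndicator t) (ae_of_all _ (superlevelIndicator_mem_Icc w t))

section Variation

variable {α : Type*} [LinearOrder α]

lemma edist_min_add_edist_max (t a b : ℝ) :
    edist (min a t) (min b t) + edist (max a t) (max b t) = edist a b := by
  have hsum : (min a t - min b t) + (max a t - max b t) = a - b := by
    linarith [min_add_max a t, min_add_max b t]
  simp only [edist_dist, Real.dist_eq]
  rw [← ENNReal.ofReal_add (abs_nonneg _) (abs_nonneg _), ← hsum, (abs_add_eq_add_abs_iff _ _).2]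
  rcases le_total b a with h | h
  · exact .inl ⟨sub_nonneg.2 (min_le_min_right t h), sub_nonneg.2 (max_le_max_right t h)⟩
  · exact .inr ⟨sub_nonpos.2 (min_le_min_right t h), sub_nonpos.2 (max_le_max_right t h)⟩

lemma Finset.exists_monotone_image_Iic_eq (F : Finset α) (hF : F.Nonempty) :
    ∃ u : ℕ → α, Monotone u ∧ u '' Set.Iic (F.card - 1) = F := by
  have hcard := F.card_pos.2 hF
  let u : ℕ → α := fun n ↦ F.orderEmbOfFin rfl ⟨min n (F.card - 1), by omega⟩
  refine ⟨u, fun m n hmn ↦ (F.orderEmbOfFin rfl).monotone ?_, ?_⟩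
  · simp only [Fin.mk_le_mk]
    omega
  ext x
  simp only [← F.range_orderEmbOfFin rfl, u]
  constructor
  · rintro ⟨i, -, rfl⟩
    exact ⟨_, rfl⟩
  · rintro ⟨i, rfl⟩
    have := i.2
    exact ⟨i, Set.mem_Iic.2 (by omega), congrArg _ (Fin.ext (min_eq_left (by omega)))⟩

lemma eVariationOn_finset_min_add_max (v : α → ℝ) (t : ℝ) (F : Finset α) :
    eVariationOn (fun x ↦ min (v x) t) F + eVariationOn (fun x ↦ max (v x) t) F
      = eVariationOn v F := by
  rcases F.eq_empty_or_nonempty with rfl | hF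
  · simp [eVariationOn.subsingleton]
  obtain ⟨u, hu, hF⟩ := F.exists_monotone_image_Iic_eq hF
  rw [← hF, eVariationOn.image_range_of_monotone _ hu, eVariationOn.image_range_of_monotone _ hu,
    eVariationOn.image_range_of_monotone _ hu, ← Finset.sum_add_distrib]
  simp only [edist_min_add_edist_max]

theorem eVariationOn_min_add_max_le (v : α → ℝ) (t : ℝ) (s : Set α) :
    eVariationOn (fun x ↦ min (v x) t) s + eVariationOn (fun x ↦ max (v x) t) s
      ≤ eVariationOn v s := by
  rcases s.eq_empty_or_nonempty with rfl | hs
  · simp [eVariationOn.subsingleton]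
  have := eVariationOn.nonempty_monotone_mem hs
  refine ENNReal.iSup_add_iSup_le fun ⟨m, p, hp, hps⟩ ⟨n, q, hq, hqs⟩ ↦ ?_
  classical
  set F := (Finset.range (m + 1)).image p ∪ (Finset.range (n + 1)).image q
  have hpF : p '' Iic m ⊆ F := by
    rintro _ ⟨i, hi, rfl⟩
    simp only [F, Finset.coe_union, Finset.coe_image]
    exact .inl ⟨i, by simpa [Nat.lt_succ_iff] using hi, rfl⟩
  have hqF : q '' Iic n ⊆ F := by
    rintro _ ⟨i, hi, rfl⟩
    simp only [F, Finset.coe_union, Finset.coe_image]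
    exact .inr ⟨i, by simpa [Nat.lt_succ_iff] using hi, rfl⟩
  have hFs : (F : Set α) ⊆ s := by
    simp only [F, Finset.coe_union, Finset.coe_image, union_subset_iff]
    exact ⟨image_subset_iff.2 fun i _ ↦ hps i, image_subset_iff.2 fun i _ ↦ hqs i⟩
  calc _ ≤ eVariationOn (fun x ↦ min (v x) t) F + eVariationOn (fun x ↦ max (v x) t) F := by
        gcongr
        · exact (Finset.sum_congr rfl fun i _ ↦ edist_comm _ _).trans_le
            ((eVariationOn.image_range_of_monotone _ hp m).symm.le.trans (eVariationOn.mono _ hpF))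
        · exact (Finset.sum_congr rfl fun i _ ↦ edist_comm _ _).trans_le
            ((eVariationOn.image_range_of_monotone _ hq n).symm.le.trans (eVariationOn.mono _ hqF))
    _ = eVariationOn v F := eVariationOn_finset_min_add_max v t F
    _ ≤ eVariationOn v s := eVariationOn.mono _ hFs

lemma eVariationOn_add_const (v : α → ℝ) (c : ℝ) (s : Set α) :
    eVariationOn (fun x ↦ v x + c) s = eVariationOn v s := by
  simp only [eVariationOn, edist_add_right]

lemma eVariationOn_min_le (v : α → ℝ) (t : ℝ) (s : Set α) :
    eVariationOn (fun x ↦ min (v x) t) s ≤ eVariationOn v s := by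
  simpa [Function.comp_def] using
    (LipschitzWith.id.min_const t).lipschitzOnWith.comp_eVariationOn_le (mapsTo_univ v s)

lemma eVariationOn_min_add_sub_min_le (w : α → ℝ) (s : Set α) {t₁ t₂ : ℝ} (h : t₁ ≤ t₂) :
    eVariationOn (fun x ↦ min (w x) t₁) s + eVariationOn (fun x ↦ min (w x) t₂ - min (w x) t₁) s
      ≤ eVariationOn (fun x ↦ min (w x) t₂) s := by
  have hmin : (fun x ↦ min (min (w x) t₂) t₁) = fun x ↦ min (w x) t₁ := by
    simp [min_assoc, min_eq_right h]
  have hmax : (fun x ↦ max (min (w x) t₂) t₁) = fun x ↦ (min (w x) t₂ - min (w x) t₁) + t₁ := by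
    funext x
    rcases le_total (w x) t₁ with hx | hx
    · simp [hx, hx.trans h]
    · rw [min_eq_right hx, max_eq_left (le_min hx h)]
      ring
  simpa only [hmin, hmax, eVariationOn_add_const] using
    eVariationOn_min_add_max_le (fun x ↦ min (w x) t₂) t₁ s

noncomputable def truncatedVariation (w : α → ℝ) (s : Set α) (t : ℝ) : ℝ :=
  (eVariationOn (fun x ↦ min (w x) t) s).toReal

variable {w : α → ℝ} {s : Set α}

lemma eVariationOn_min_sub_min_le (hw : eVariationOn w s ≠ ⊤) {t₁ t₂ : ℝ} (h : t₁ ≤ t₂) :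
    eVariationOn (fun x ↦ min (w x) t₂ - min (w x) t₁) s
      ≤ ENNReal.ofReal (truncatedVariation w s t₂ - truncatedVariation w s t₁) := by
  have hle := eVariationOn_min_add_sub_min_le w s h
  have hfin₁ := ne_top_of_le_ne_top hw (eVariationOn_min_le w t₁ s)
  have hfin₂ := ne_top_of_le_ne_top hw (eVariationOn_min_le w t₂ s)
  rw [truncatedVariation, truncatedVariation,
    ← ENNReal.toReal_sub_of_le (le_self_add.trans hle) hfin₂, ENNReal.ofReal_toReal (by finiteness)]
  exact ENNReal.le_sub_of_add_le_left hfin₁ hle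

lemma truncatedVariation_monotone (hw : eVariationOn w s ≠ ⊤) :
    Monotone (truncatedVariation w s) := fun _ t₂ h ↦
  ENNReal.toReal_mono (ne_top_of_le_ne_top hw (eVariationOn_min_le w t₂ s))
    (le_self_add.trans (eVariationOn_min_add_sub_min_le w s h))

lemma HasDerivAt.tendsto_nat_mul_sub {f : ℝ → ℝ} {f' x : ℝ} (hf : HasDerivAt f f' x) :
    Tendsto (fun n : ℕ ↦ (n : ℝ) * (f (x + (n : ℝ)⁻¹) - f x)) atTop (𝓝 f') := by
  have hx : Tendsto (fun n : ℕ ↦ x + (n : ℝ)⁻¹) atTop (𝓝[≠] x) :=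
    tendsto_nhdsWithin_of_tendsto_nhds_of_eventually_within _
      (by simpa using tendsto_const_nhds.add (tendsto_inv_atTop_nhds_zero_nat (𝕜 := ℝ)))
      (by simp [eventually_ne_atTop 0])
  refine (hf.tendsto_slope.comp hx).congr' ?_
  filter_upwards [eventually_ne_atTop 0] with n hn
  simp [slope_def_field, mul_comm]

lemma tendsto_nat_mul_min_sub_min (a τ : ℝ) :
    Tendsto (fun n : ℕ ↦ (n : ℝ) * (min a (τ + (n : ℝ)⁻¹) - min a τ)) atTop
      (𝓝 ((Ioi τ).indicator 1 a)) := by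
  by_cases h : τ < a
  · rw [indicator_of_mem (mem_Ioi.2 h)]
    refine tendsto_const_nhds.congr' ?_
    filter_upwards [eventually_ne_atTop 0,
      (tendsto_inv_atTop_nhds_zero_nat (𝕜 := ℝ)).eventually_lt_const (sub_pos.2 h)] with n hn hlt
    rw [min_eq_right (by linarith), min_eq_right h.le, Pi.one_apply]
    field_simp
    ring
  · rw [indicator_of_notMem (notMem_Ioi.2 (not_lt.1 h))]
    refine tendsto_const_nhds.congr fun n ↦ ?_
    rw [min_eq_left (not_lt.1 h),
      min_eq_left ((not_lt.1 h).trans (le_add_of_nonneg_right (by positivity))), sub_self, mul_zero]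

theorem eVariationOn_superlevelIndicator_le_deriv (hw : eVariationOn w s ≠ ⊤) {τ : ℝ}
    (hτ : DifferentiableAt ℝ (truncatedVariation w s) τ) :
    eVariationOn (superlevelIndicator w τ) s
      ≤ ENNReal.ofReal (deriv (truncatedVariation w s) τ) := by
  set V := truncatedVariation w s
  set F : ℕ → α → ℝ := fun n x ↦ (n : ℝ) * (min (w x) (τ + (n : ℝ)⁻¹) - min (w x) τ)
  have hF : ∀ n, eVariationOn (F n) s ≤ ENNReal.ofReal ((n : ℝ) * (V (τ + (n : ℝ)⁻¹) - V τ)) := by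
    intro n
    have hτn : τ ≤ τ + (n : ℝ)⁻¹ := le_add_of_nonneg_right (by positivity)
    calc eVariationOn (F n) s
        ≤ ‖(n : ℝ)‖₊ * eVariationOn (fun x ↦ min (w x) (τ + (n : ℝ)⁻¹) - min (w x) τ) s :=
          (lipschitzWith_smul (n : ℝ)).lipschitzOnWith.comp_eVariationOn_le (mapsTo_univ _ s)
      _ ≤ ENNReal.ofReal n * ENNReal.ofReal (V (τ + (n : ℝ)⁻¹) - V τ) := by
          gcongr
          · simp
          · exact eVariationOn_min_sub_min_le hw hτn
      _ = _ := (ENNReal.ofReal_mul n.cast_nonneg).symm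
  have hlim := ENNReal.tendsto_ofReal hτ.hasDerivAt.tendsto_nat_mul_sub
  -- `F n → 1_{w > τ}` pointwise, and the variation is lower semicontinuous.
  refine le_of_forall_lt_imp_le_of_dense fun c hc ↦ ge_of_tendsto hlim ?_
  filter_upwards [eVariationOn.lowerSemicontinuous_aux
    (fun x _ ↦ tendsto_nat_mul_min_sub_min (w x) τ) hc] with n hn
  exact (hn.trans_le (hF n)).le

theorem lintegral_ofReal_deriv_truncatedVariation_le (hw : eVariationOn w s ≠ ⊤) (a b : ℝ) :
    ∫⁻ t in Ioo a b, ENNReal.ofReal (deriv (truncatedVariation w s) t) ≤ eVariationOn w s := by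
  rcases lt_or_ge a b with hab | hab
  swap
  · simp [Ioo_eq_empty hab.not_gt]
  set V := truncatedVariation w s
  have hV := truncatedVariation_monotone hw
  have hint : IntegrableOn (deriv V) (Ioo a b) :=
    ((hV.monotoneOn _).intervalIntegrable_deriv.1).mono_set Ioo_subset_Ioc_self
  rw [← ofReal_integral_eq_lintegral_ofReal hint (ae_of_all _ fun t ↦ hV.deriv_nonneg),
    ← integral_Ioc_eq_integral_Ioo, ← intervalIntegral.integral_of_le hab.le]
  have hle := (hV.monotoneOn (uIcc a b)).intervalIntegral_deriv_mem_uIcc.2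
  rw [max_eq_right (sub_nonneg.2 (hV hab.le))] at hle
  calc ENNReal.ofReal (∫ t in a..b, deriv V t)
      ≤ ENNReal.ofReal (V b) :=
        ENNReal.ofReal_le_ofReal (hle.trans (sub_le_self _ ENNReal.toReal_nonneg))
    _ ≤ eVariationOn w s := ENNReal.ofReal_toReal_le.trans (eVariationOn_min_le w b s)

end Variation

section LayerCake

lemma lintegral_Ioo_ofReal_indicator_Ioi {a A B : ℝ} (ha : a ∈ Icc (0 : ℝ) 1) (hA : 0 ≤ A) (hB : 0 ≤ B) :
    ∫⁻ t in Ioo 0 1, ENNReal.ofReal ((Ioi t).indicator 1 a * A + (1 - (Ioi t).indicator 1 a) * B)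
      = ENNReal.ofReal (a * A + (1 - a) * B) := by
  have h : ∀ t, ENNReal.ofReal ((Ioi t).indicator 1 a * A + (1 - (Ioi t).indicator 1 a) * B)
      = (Iio a).indicator (fun _ ↦ ENNReal.ofReal A) t
        + (Ici a).indicator (fun _ ↦ ENNReal.ofReal B) t := by
    intro t
    by_cases hta : t < a
    · simp [hta, indicator_of_mem, indicator_of_notMem, hta.not_ge]
    · simp [hta, indicator_of_mem, indicator_of_notMem, not_lt.1 hta]
  have hlt : volume (Iio a ∩ Ioo 0 1) = ENNReal.ofReal a := by
    rw [Iio_inter_Ioo, min_eq_left ha.2, Real.volume_Ioo, sub_zero]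
  have hge : volume (Ici a ∩ Ioo 0 1) = ENNReal.ofReal (1 - a) := by
    refine le_antisymm ?_ ?_
    · exact (measure_mono (t := Icc a 1) fun t ht ↦ ⟨ht.1, ht.2.2.le⟩).trans Real.volume_Icc.le
    · exact Real.volume_Ioo.symm.le.trans
        (measure_mono fun t (ht : t ∈ Ioo a 1) ↦ ⟨ht.1.le, ha.1.trans_lt ht.1, ht.2⟩)
  simp only [h]
  rw [lintegral_add_left (measurable_const.indicator measurableSet_Iio),
    lintegral_indicator measurableSet_Iio, lintegral_indicator measurableSet_Ici,
    setLIntegral_const, setLIntegral_const, Measure.restrict_apply measurableSet_Iio,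
    Measure.restrict_apply measurableSet_Ici, hlt, hge,
    ENNReal.ofReal_add (mul_nonneg ha.1 hA) (mul_nonneg (sub_nonneg.2 ha.2) hB),
    ENNReal.ofReal_mul ha.1, ENNReal.ofReal_mul (sub_nonneg.2 ha.2), mul_comm (ENNReal.ofReal A),
    mul_comm (ENNReal.ofReal B)]

variable {X : Type*} [MeasurableSpace X] {μ : Measure X} {w A B : X → ℝ}

lemma aemeasurable_uncurry_superlevelIndicator (ν : Measure ℝ) (hw : AEMeasurable w μ)
    (hA : AEMeasurable A μ) (hB : AEMeasurable B μ) :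
    AEMeasurable (Function.uncurry fun t x ↦ ENNReal.ofReal
      (superlevelIndicator w t x * A x + (1 - superlevelIndicator w t x) * B x)) (ν.prod μ) := by
  have hχ : Measurable fun q : ℝ × ℝ × ℝ × ℝ ↦ (Ioi q.1).indicator (1 : ℝ → ℝ) q.2.1 :=
    measurable_one.indicator (measurableSet_lt measurable_fst measurable_snd.fst)
  have hΦ : Measurable fun q : ℝ × ℝ × ℝ × ℝ ↦ ENNReal.ofReal
      ((Ioi q.1).indicator 1 q.2.1 * q.2.2.1 + (1 - (Ioi q.1).indicator 1 q.2.1) * q.2.2.2) := by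
    fun_prop
  exact hΦ.comp_aemeasurable (measurable_fst.aemeasurable.prodMk
    (hw.comp_snd.prodMk (hA.comp_snd.prodMk hB.comp_snd)))

theorem lintegral_lintegral_superlevelIndicator [SFinite μ] (hw : AEMeasurable w μ)
    (hA : AEMeasurable A μ) (hB : AEMeasurable B μ) (hw01 : ∀ x, w x ∈ Icc (0 : ℝ) 1)
    (hA0 : ∀ x, 0 ≤ A x) (hB0 : ∀ x, 0 ≤ B x) :
    ∫⁻ t in Ioo 0 1, ∫⁻ x, ENNReal.ofReal (superlevelIndicator w t x * A x
        + (1 - superlevelIndicator w t x) * B x) ∂μ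
      = ∫⁻ x, ENNReal.ofReal (w x * A x + (1 - w x) * B x) ∂μ := by
  rw [lintegral_lintegral_swap (aemeasurable_uncurry_superlevelIndicator _ hw hA hB)]
  exact lintegral_congr fun x ↦ lintegral_Ioo_ofReal_indicator_Ioi (hw01 x) (hA0 x) (hB0 x)

end LayerCake

section WeightedMeans

variable {X : Type*} [MeasurableSpace X] {μ : Measure X}

theorem integral_mul_eq_mul_integral_of_isMinOn {g f : X → ℝ} (hg : Integrable g μ)
    (hg0 : ∀ᵐ x ∂μ, 0 ≤ g x) (hf : AEStronglyMeasurable f μ) (hf01 : ∀ᵐ x ∂μ, f x ∈ Icc (0 : ℝ) 1)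
    {c : ℝ} (hmin : IsMinOn (fun d ↦ ∫ x, g x * (d - f x) ^ 2 ∂μ) (Icc 0 1) c) :
    ∫ x, g x * f x ∂μ = c * ∫ x, g x ∂μ := by
  have hbd : ∀ n : ℕ, ∀ᵐ x ∂μ, ‖f x ^ n‖ ≤ 1 := fun n ↦ hf01.mono fun x hx ↦ by
    rw [norm_pow, Real.norm_of_nonneg hx.1]
    exact pow_le_one₀ hx.1 hx.2
  have hgf : Integrable (fun x ↦ g x * f x) μ :=
    (hg.mul_bdd (hf.pow 1) (hbd 1)).congr (ae_of_all _ fun x ↦ by simp)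
  have hgf₂ : Integrable (fun x ↦ g x * f x ^ 2) μ := hg.mul_bdd (hf.pow 2) (hbd 2)
  set P := ∫ x, g x ∂μ
  set M := ∫ x, g x * f x ∂μ
  have hexp : ∀ d : ℝ, ∫ x, g x * (d - f x) ^ 2 ∂μ
      = d ^ 2 * P - 2 * d * M + ∫ x, g x * f x ^ 2 ∂μ := fun d ↦ by
    have : (fun x ↦ g x * (d - f x) ^ 2)
        = fun x ↦ d ^ 2 * g x - 2 * d * (g x * f x) + g x * f x ^ 2 := by
      ext x; ring
    have hint : Integrable (fun x ↦ d ^ 2 * g x - 2 * d * (g x * f x)) μ :=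
      (hg.const_mul _).sub (hgf.const_mul _)
    rw [this, integral_add hint hgf₂,
      integral_sub (hg.const_mul _) (hgf.const_mul _), integral_const_mul, integral_const_mul]
  have hM0 : 0 ≤ M := integral_nonneg_of_ae <| (hg0.and hf01).mono fun x hx ↦
    mul_nonneg hx.1 hx.2.1
  have hMP : M ≤ P := integral_mono_ae hgf hg <| (hg0.and hf01).mono fun x hx ↦
    mul_le_of_le_one_right hx.1 hx.2.2
  rcases (hM0.trans hMP).eq_or_lt with hP | hP
  · rw [← hP, le_antisymm (hP ▸ hMP) hM0, mul_zero]
  have hd : M / P ∈ Icc (0 : ℝ) 1 := ⟨div_nonneg hM0 hP.le, (div_le_one hP).2 hMP⟩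
  have h := isMinOn_iff.1 hmin _ hd
  set d := M / P
  have hM : M = d * P := (div_mul_cancel₀ M hP.ne').symm
  rw [hexp, hexp, hM] at h
  have hsq : P * (c - d) ^ 2 ≤ 0 := by linarith [show P * (c - d) ^ 2
    = (c ^ 2 * P - 2 * c * (d * P)) - (d ^ 2 * P - 2 * d * (d * P)) by ring]
  have hcd : (c - d) ^ 2 = 0 := le_antisymm (by nlinarith) (sq_nonneg _)
  rw [hM, sub_eq_zero.1 (pow_eq_zero_iff two_ne_zero |>.1 hcd)]


def HasWeightedMeans (μ : Measure X) (f v : X → ℝ) (c₁ c₂ : ℝ) : Prop :=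
  ∫ x, v x * f x ∂μ = c₁ * ∫ x, v x ∂μ ∧ ∫ x, (1 - v x) * f x ∂μ = c₂ * ∫ x, (1 - v x) ∂μ

theorem HasWeightedMeans.integral_eq [IsFiniteMeasure μ] {f v₁ v₂ : X → ℝ} {c₁ c₂ : ℝ}
    (hf : Integrable f μ) (hc : c₁ ≠ c₂)
    (hv₁ : AEMeasurable v₁ μ) (hv₁01 : ∀ x, v₁ x ∈ Icc (0 : ℝ) 1)
    (hv₂ : AEMeasurable v₂ μ) (hv₂01 : ∀ x, v₂ x ∈ Icc (0 : ℝ) 1)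
    (h₁ : HasWeightedMeans μ f v₁ c₁ c₂) (h₂ : HasWeightedMeans μ f v₂ c₁ c₂) :
    ∫ x, v₁ x ∂μ = ∫ x, v₂ x ∂μ := by
  have hcompl : ∀ v : X → ℝ, AEMeasurable v μ → (∀ x, v x ∈ Icc (0 : ℝ) 1) →
      HasWeightedMeans μ f v c₁ c₂ →
      ∫ x, f x ∂μ - ∫ x, v x * f x ∂μ = c₂ * (μ.real univ - ∫ x, v x ∂μ) := by
    rintro v hv hv01 ⟨-, h⟩
    have hvint : Integrable v μ :=
      memLp_one_iff_integrable.1 (memLp_of_ae_mem_Icc 1 hv (ae_of_all _ hv01))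
    simp only [sub_mul, one_mul] at h
    rwa [integral_sub hf (hf.bdd_mul hv.aestronglyMeasurable
        (ae_of_all _ fun x ↦ norm_le_one_of_mem_Icc (hv01 x))),
      integral_sub (integrable_const 1) hvint, integral_const, smul_eq_mul, mul_one] at h
  have heq : (c₁ - c₂) * (∫ x, v₁ x ∂μ - ∫ x, v₂ x ∂μ) = 0 := by
    linear_combination hcompl v₂ hv₂ hv₂01 h₂ - hcompl v₁ hv₁ hv₁01 h₁ - h₁.1 + h₂.1
  exact sub_eq_zero.1 ((mul_eq_zero.1 heq).resolve_left (sub_ne_zero.2 hc))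

theorem measure_superlevel_diff_eq_zero [IsFiniteMeasure μ] {w f : X → ℝ} (hw : AEMeasurable w μ)
    (hf : Integrable f μ) {c₁ c₂ t₁ t₂ : ℝ} (hc : c₁ ≠ c₂)
    (h₁ : HasWeightedMeans μ f (superlevelIndicator w t₁) c₁ c₂)
    (h₂ : HasWeightedMeans μ f (superlevelIndicator w t₂) c₁ c₂) :
    μ {x | t₁ < w x ∧ w x ≤ t₂} = 0 := by
  rcases lt_or_ge t₂ t₁ with ht | ht
  · convert measure_empty (μ := μ)
    exact eq_empty_of_forall_notMem fun x hx ↦ (hx.1.trans_le hx.2).not_gt ht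
  set χ₁ := superlevelIndicator w t₁
  set χ₂ := superlevelIndicator w t₂
  have hint : ∀ t, Integrable (superlevelIndicator w t) μ := fun t ↦
    memLp_one_iff_integrable.1 (memLp_superlevelIndicator 1 hw t)
  have hzero : ∫ x, (χ₁ - χ₂) x ∂μ = 0 := by
    rw [Pi.sub_def, integral_sub (hint t₁) (hint t₂), sub_eq_zero]
    exact h₁.integral_eq hf hc (hw.superlevelIndicator t₁) (superlevelIndicator_mem_Icc w t₁)
      (hw.superlevelIndicator t₂) (superlevelIndicator_mem_Icc w t₂) h₂
  have hle : 0 ≤ᵐ[μ] χ₁ - χ₂ := ae_of_all _ fun x ↦ by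
    by_cases hx : t₂ < w x
    · simp [χ₁, χ₂, superlevelIndicator, hx, ht.trans_lt hx, indicator_of_mem]
    · have h0 : χ₂ x = 0 := by simp [χ₂, superlevelIndicator, hx]
      simpa [h0] using (superlevelIndicator_mem_Icc w t₁ x).1
  refine measure_mono_null (fun x hx ↦ ?_) (ae_iff.1
    ((integral_eq_zero_iff_of_nonneg_ae hle ((hint t₁).sub (hint t₂))).1 hzero))
  simp [χ₁, χ₂, superlevelIndicator, hx.1, hx.2.not_gt, indicator_of_mem, indicator_of_notMem]

lemma exists_mem_Ioo_of_ae_restrict_Ioo {P : ℝ → Prop} {a b a' b' : ℝ}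
    (h : ∀ᵐ t ∂volume.restrict (Ioo a b), P t) (hsub : Ioo a' b' ⊆ Ioo a b) (hlt : a' < b') :
    ∃ t ∈ Ioo a' b', P t := by
  have : (ae (volume.restrict (Ioo a' b'))).NeBot := ae_restrict_neBot.2 (by simp [hlt])
  exact ((ae_restrict_mem measurableSet_Ioo).and
    (ae_restrict_of_ae_restrict_of_subset hsub h)).exists

theorem ae_eq_zero_or_one_of_ae_hasWeightedMeans [IsFiniteMeasure μ] {w f : X → ℝ}
    (hw : AEMeasurable w μ) (hf : Integrable f μ) {c₁ c₂ : ℝ} (hc : c₁ ≠ c₂)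
    (hw01 : ∀ᵐ x ∂μ, w x ∈ Icc (0 : ℝ) 1)
    (hgood : ∀ᵐ t ∂volume.restrict (Ioo (0 : ℝ) 1),
      HasWeightedMeans μ f (superlevelIndicator w t) c₁ c₂) :
    ∀ᵐ x ∂μ, w x = 0 ∨ w x = 1 := by
  have hε : ∀ n : ℕ, 0 < 1 / ((n : ℝ) + 1) ∧ 1 / ((n : ℝ) + 1) ≤ 1 := fun n ↦
    ⟨by positivity, div_le_one_of_le₀ (by linarith [n.cast_nonneg (α := ℝ)]) (by positivity)⟩
  choose t₁ ht₁ hgood₁ using fun n : ℕ ↦ exists_mem_Ioo_of_ae_restrict_Ioo hgood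
    (Ioo_subset_Ioo_right (hε n).2) (hε n).1
  choose t₂ ht₂ hgood₂ using fun n : ℕ ↦ exists_mem_Ioo_of_ae_restrict_Ioo hgood
    (Ioo_subset_Ioo_left (sub_nonneg.2 (hε n).2)) (sub_lt_self 1 (hε n).1)
  have hnull : ∀ᵐ x ∂μ, ∀ n, ¬(t₁ n < w x ∧ w x ≤ t₂ n) := ae_all_iff.2 fun n ↦
    measure_eq_zero_iff_ae_notMem.1
      (measure_superlevel_diff_eq_zero hw hf hc (hgood₁ n) (hgood₂ n))
  filter_upwards [hnull, hw01] with x hx hx01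
  by_contra h
  obtain ⟨h0, h1⟩ := not_or.1 h
  have hpos : 0 < min (w x) (1 - w x) :=
    lt_min (hx01.1.lt_of_ne' h0) (sub_pos.2 (hx01.2.lt_of_ne h1))
  obtain ⟨n, hn⟩ := exists_nat_one_div_lt hpos
  rw [lt_min_iff] at hn
  exact hx n ⟨(ht₁ n).2.trans hn.1, by linarith [(ht₂ n).1]⟩

end WeightedMeans

lemma BoundedVariationOn.aemeasurable_restrict {f : ℝ → ℝ} {s : Set ℝ} {μ : Measure ℝ}
    (h : BoundedVariationOn f s) (hs : MeasurableSet s) : AEMeasurable f (μ.restrict s) := by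
  obtain ⟨p, q, hp, hq, rfl⟩ := h.locallyBoundedVariationOn.exists_monotoneOn_sub_monotoneOn
  exact (aemeasurable_restrict_of_monotoneOn hs hp).sub (aemeasurable_restrict_of_monotoneOn hs hq)

section ChanVese

noncomputable def fidelity (f v : ℝ → ℝ) (d₁ d₂ : ℝ) : ℝ≥0∞ :=
  ∫⁻ x in Ioo (0 : ℝ) 1, ENNReal.ofReal (v x * (d₁ - f x) ^ 2 + (1 - v x) * (d₂ - f x) ^ 2)

def IsFcvMinimizer (lam : ℝ) (f u : ℝ → ℝ) (c₁ c₂ : ℝ) : Prop :=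
  ∀ (u' : ℝ → ℝ) (d₁ d₂ : ℝ), MemLp u' 2 μ₀₁ →
    d₁ ∈ Icc (0 : ℝ) 1 → d₂ ∈ Icc (0 : ℝ) 1 → Fcv lam f u c₁ c₂ ≤ Fcv lam f u' d₁ d₂

variable {lam : ℝ} {f u v w : ℝ → ℝ} {c₁ c₂ d₁ d₂ : ℝ}

lemma Fcv_eq_of_mem_Icc (hv : ∀ x, v x ∈ Icc (0 : ℝ) 1) :
    Fcv lam f v d₁ d₂ = eVariationOn v (Ioo 0 1) + ENNReal.ofReal lam * fidelity f v d₁ d₂ := by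
  simp [Fcv, fidelity, hv]

lemma sq_sub_le_one {a b : ℝ} (ha : a ∈ Icc (0 : ℝ) 1) (hb : b ∈ Icc (0 : ℝ) 1) :
    (a - b) ^ 2 ≤ 1 := by
  rw [sq_le_one_iff_abs_le_one, abs_le]
  constructor <;> linarith [ha.1, ha.2, hb.1, hb.2]

variable (hf01 : ∀ x ∈ Ioo (0 : ℝ) 1, f x ∈ Icc (0 : ℝ) 1)
include hf01

lemma fidelity_ne_top (hv : ∀ x, v x ∈ Icc (0 : ℝ) 1) (hd₁ : d₁ ∈ Icc (0 : ℝ) 1)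
    (hd₂ : d₂ ∈ Icc (0 : ℝ) 1) : fidelity f v d₁ d₂ ≠ ⊤ := by
  refine ne_top_of_le_ne_top (b := ∫⁻ _ in Ioo (0 : ℝ) 1, 1) (by simp) ?_
  refine setLIntegral_mono measurable_const fun x hx ↦ ENNReal.ofReal_le_one.2 ?_
  nlinarith [sq_sub_le_one hd₁ (hf01 x hx), sq_sub_le_one hd₂ (hf01 x hx), (hv x).1, (hv x).2]

lemma integrable_mul_sq_sub {g : ℝ → ℝ} (hg : AEMeasurable g μ₀₁) (hg01 : ∀ x, g x ∈ Icc (0 : ℝ) 1)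
    (hf : AEMeasurable f μ₀₁) {d : ℝ} (hd : d ∈ Icc (0 : ℝ) 1) :
    Integrable (fun x ↦ g x * (d - f x) ^ 2) μ₀₁ := by
  refine Integrable.of_bound (by fun_prop) 1
    ((ae_restrict_of_forall_mem measurableSet_Ioo hf01).mono fun x hx ↦ ?_)
  rw [Real.norm_of_nonneg (mul_nonneg (hg01 x).1 (sq_nonneg _))]
  exact mul_le_one₀ (hg01 x).2 (sq_nonneg _) (sq_sub_le_one hd hx)

lemma fidelity_eq_ofReal_integral (hf : AEMeasurable f μ₀₁) (hv : AEMeasurable v μ₀₁)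
    (hv01 : ∀ x, v x ∈ Icc (0 : ℝ) 1) (hd₁ : d₁ ∈ Icc (0 : ℝ) 1) (hd₂ : d₂ ∈ Icc (0 : ℝ) 1) :
    fidelity f v d₁ d₂ = ENNReal.ofReal
      ((∫ x, v x * (d₁ - f x) ^ 2 ∂μ₀₁) + ∫ x, (1 - v x) * (d₂ - f x) ^ 2 ∂μ₀₁) := by
  have hv01' : ∀ x, 1 - v x ∈ Icc (0 : ℝ) 1 := fun x ↦
    ⟨sub_nonneg.2 (hv01 x).2, sub_le_self _ (hv01 x).1⟩
  have h₁ := integrable_mul_sq_sub hf01 hv hv01 hf hd₁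
  have h₂ := integrable_mul_sq_sub hf01 (by fun_prop) hv01' hf hd₂
  rw [← integral_add h₁ h₂, ofReal_integral_eq_lintegral_ofReal
    (f := fun x ↦ v x * (d₁ - f x) ^ 2 + (1 - v x) * (d₂ - f x) ^ 2) (h₁.add h₂)
    (ae_of_all _ fun x ↦ add_nonneg (mul_nonneg (hv01 x).1 (sq_nonneg _))
      (mul_nonneg (hv01' x).1 (sq_nonneg _)))]
  rfl

lemma IsFcvMinimizer.Fcv_ne_top (hu : IsFcvMinimizer lam f u c₁ c₂) : Fcv lam f u c₁ c₂ ≠ ⊤ := by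
  have h0 : (0 : ℝ) ∈ Icc (0 : ℝ) 1 := left_mem_Icc.2 zero_le_one
  refine ne_top_of_le_ne_top ?_ (hu 0 0 0 (memLp_const 0) h0 h0)
  rw [Fcv_eq_of_mem_Icc (v := 0) fun _ ↦ h0]
  exact ENNReal.add_ne_top.2 ⟨by simp [eVariationOn.constant_on],
    ENNReal.mul_ne_top ENNReal.ofReal_ne_top (fidelity_ne_top hf01 (fun _ ↦ h0) h0 h0)⟩

lemma IsFcvMinimizer.eVariationOn_ne_top (hu : IsFcvMinimizer lam f u c₁ c₂)
    (hu01 : ∀ x, u x ∈ Icc (0 : ℝ) 1) : eVariationOn u (Ioo 0 1) ≠ ⊤ :=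
  ne_top_of_le_ne_top (hu.Fcv_ne_top hf01) (Fcv_eq_of_mem_Icc hu01 ▸ le_self_add)

lemma IsFcvMinimizer.ae_eq_const (hu : IsFcvMinimizer lam f u c₁ c₁) (hc₁ : c₁ ∈ Icc (0 : ℝ) 1) :
    ∃ k : ℝ, ∀ᵐ x ∂μ₀₁, u x = k := by
  have h0 : ∀ _ : ℝ, (0 : ℝ) ∈ Icc (0 : ℝ) 1 := fun _ ↦ left_mem_Icc.2 zero_le_one
  have hK : ENNReal.ofReal lam * fidelity f 0 c₁ c₁ ≠ ⊤ :=
    ENNReal.mul_ne_top ENNReal.ofReal_ne_top (fidelity_ne_top hf01 h0 hc₁ hc₁)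
  have hfid : fidelity f u c₁ c₁ = fidelity f 0 c₁ c₁ :=
    lintegral_congr fun x ↦ by simp only [Pi.zero_apply]; ring_nf
  have h := hu 0 c₁ c₁ (memLp_const 0) hc₁ hc₁
  rw [Fcv_eq_of_mem_Icc (v := 0) h0, eVariationOn.constant_on (by simp)] at h
  change _ + _ + ENNReal.ofReal lam * fidelity f u c₁ c₁ ≤ _ at h
  rw [hfid, ENNReal.add_le_add_iff_right hK] at h
  have hVar : eVariationOn u (Ioo 0 1) = 0 := le_antisymm (le_self_add.trans h) zero_le
  refine ⟨u (1 / 2), ?_⟩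
  filter_upwards [ae_restrict_mem measurableSet_Ioo] with x hx
  exact edist_eq_zero.1 ((eVariationOn.eq_zero_iff u).1 hVar x hx _ ⟨by norm_num, by norm_num⟩)

lemma IsFcvMinimizer.exists_mem_Icc (hu : IsFcvMinimizer lam f u c₁ c₂)
    (hum : AEMeasurable u μ₀₁) :
    ∃ w : ℝ → ℝ, (∀ x, w x ∈ Icc (0 : ℝ) 1) ∧ w =ᵐ[μ₀₁] u ∧ IsFcvMinimizer lam f w c₁ c₂ := by
  have hind : ∫⁻ x in Ioo (0 : ℝ) 1, (if u x ∈ Icc (0 : ℝ) 1 then 0 else ⊤) ≠ ⊤ :=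
    ne_top_of_le_ne_top (hu.Fcv_ne_top hf01) (le_add_self.trans le_self_add)
  have hae : ∀ᵐ x ∂μ₀₁, u x ∈ Icc (0 : ℝ) 1 := by
    have hm : Measurable fun a : ℝ ↦ if a ∈ Icc (0 : ℝ) 1 then (0 : ℝ≥0∞) else ⊤ :=
      Measurable.ite measurableSet_Icc measurable_const measurable_const
    filter_upwards [ae_lt_top' (hm.comp_aemeasurable hum) hind] with x hx
    by_contra h
    simp only [Function.comp_apply, if_neg h] at hx
    exact lt_irrefl _ hx
  set w : ℝ → ℝ := fun x ↦ max 0 (min (u x) 1)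
  have hw01 : ∀ x, w x ∈ Icc (0 : ℝ) 1 := fun x ↦
    ⟨le_max_left _ _, max_le zero_le_one (min_le_right _ _)⟩
  have hwu : w =ᵐ[μ₀₁] u := hae.mono fun x hx ↦ by simp [w, hx.1, hx.2]
  have hle : Fcv lam f w c₁ c₂ ≤ Fcv lam f u c₁ c₂ := by
    rw [Fcv_eq_of_mem_Icc hw01]
    calc eVariationOn w (Ioo 0 1) + ENNReal.ofReal lam * fidelity f w c₁ c₂
        ≤ eVariationOn u (Ioo 0 1) + ENNReal.ofReal lam * fidelity f u c₁ c₂ := by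
          gcongr ?_ + _ * ?_
          · simpa [w, Function.comp_def] using ((LipschitzWith.id.min_const 1).const_max
              0).lipschitzOnWith.comp_eVariationOn_le (mapsTo_univ u (Ioo 0 1))
          · exact (lintegral_congr_ae (hwu.mono fun x hx ↦ by rw [hx])).le
      _ ≤ Fcv lam f u c₁ c₂ := add_le_add_left le_self_add _
  exact ⟨w, hw01, hwu, fun u' d₁ d₂ hu' hd₁ hd₂ ↦ hle.trans (hu u' d₁ d₂ hu' hd₁ hd₂)⟩

theorem IsFcvMinimizer.ae_superlevelIndicator (hw : IsFcvMinimizer lam f w c₁ c₂)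
    (hf : AEMeasurable f μ₀₁) (hwm : AEMeasurable w μ₀₁) (hw01 : ∀ x, w x ∈ Icc (0 : ℝ) 1)
    (hc₁ : c₁ ∈ Icc (0 : ℝ) 1) (hc₂ : c₂ ∈ Icc (0 : ℝ) 1) :
    ∀ᵐ t ∂μ₀₁, IsFcvMinimizer lam f (superlevelIndicator w t) c₁ c₂ := by
  have hVar := hw.eVariationOn_ne_top hf01 hw01
  set V := truncatedVariation w (Ioo 0 1)
  -- `t ↦ |D 1_{w > t}|` need not be measurable, so it is compared with this measurable majorant.
  set g : ℝ → ℝ≥0∞ := fun t ↦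
    ENNReal.ofReal (deriv V t) + ENNReal.ofReal lam * fidelity f (superlevelIndicator w t) c₁ c₂
  have hA : AEMeasurable (fun x ↦ (c₁ - f x) ^ 2) μ₀₁ := by fun_prop
  have hB : AEMeasurable (fun x ↦ (c₂ - f x) ^ 2) μ₀₁ := by fun_prop
  have hgm : AEMeasurable g μ₀₁ :=
    (measurable_deriv V).ennreal_ofReal.aemeasurable.add
      ((aemeasurable_uncurry_superlevelIndicator _ hwm hA hB).lintegral_prod_right'.const_mul _)
  have hint : ∫⁻ t in Ioo 0 1, g t ≤ Fcv lam f w c₁ c₂ := by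
    rw [lintegral_add_left (measurable_deriv V).ennreal_ofReal,
      lintegral_const_mul' _ _ ENNReal.ofReal_ne_top]
    unfold fidelity
    rw [lintegral_lintegral_superlevelIndicator hwm hA hB hw01 (fun _ ↦ sq_nonneg _)
        (fun _ ↦ sq_nonneg _), Fcv_eq_of_mem_Icc hw01]
    gcongr
    · exact lintegral_ofReal_deriv_truncatedVariation_le hVar 0 1
    · exact le_rfl
  have hχg : ∀ᵐ t ∂μ₀₁, Fcv lam f (superlevelIndicator w t) c₁ c₂ ≤ g t := by
    filter_upwards [ae_restrict_of_ae (truncatedVariation_monotone hVar).ae_differentiableAt]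
      with t ht
    rw [Fcv_eq_of_mem_Icc (superlevelIndicator_mem_Icc w t)]
    simp only [g]
    gcongr
    exact eVariationOn_superlevelIndicator_le_deriv hVar ht
  have hg : (fun _ ↦ Fcv lam f w c₁ c₂) =ᵐ[μ₀₁] g :=
    ae_eq_of_ae_le_of_lintegral_le
      (hχg.mono fun t ht ↦ (hw _ c₁ c₂ (memLp_superlevelIndicator 2 hwm t) hc₁ hc₂).trans ht)
      (by simpa using hw.Fcv_ne_top hf01) hgm (by simpa using hint)
  filter_upwards [hχg, hg] with t ht hgt u' d₁ d₂ hu' hd₁ hd₂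
  exact (ht.trans hgt.symm.le).trans (hw u' d₁ d₂ hu' hd₁ hd₂)

theorem IsFcvMinimizer.hasWeightedMeans (hv : IsFcvMinimizer lam f v c₁ c₂) (hlam : 0 < lam)
    (hf : AEMeasurable f μ₀₁) (hvm : AEMeasurable v μ₀₁) (hv01 : ∀ x, v x ∈ Icc (0 : ℝ) 1)
    (hc₁ : c₁ ∈ Icc (0 : ℝ) 1) (hc₂ : c₂ ∈ Icc (0 : ℝ) 1) :
    HasWeightedMeans μ₀₁ f v c₁ c₂ := by
  have hfae : ∀ᵐ x ∂μ₀₁, f x ∈ Icc (0 : ℝ) 1 := ae_restrict_of_forall_mem measurableSet_Ioo hf01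
  have hv01' : ∀ x, 1 - v x ∈ Icc (0 : ℝ) 1 := fun x ↦
    ⟨sub_nonneg.2 (hv01 x).2, sub_le_self _ (hv01 x).1⟩
  set I₁ : ℝ → ℝ := fun d ↦ ∫ x, v x * (d - f x) ^ 2 ∂μ₀₁
  set I₂ : ℝ → ℝ := fun d ↦ ∫ x, (1 - v x) * (d - f x) ^ 2 ∂μ₀₁
  have hopt : ∀ d₁ ∈ Icc (0 : ℝ) 1, ∀ d₂ ∈ Icc (0 : ℝ) 1, I₁ c₁ + I₂ c₂ ≤ I₁ d₁ + I₂ d₂ := by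
    intro d₁ hd₁ d₂ hd₂
    have h := hv v d₁ d₂ (memLp_of_ae_mem_Icc 2 hvm (ae_of_all _ hv01)) hd₁ hd₂
    rwa [Fcv_eq_of_mem_Icc hv01, Fcv_eq_of_mem_Icc hv01,
      ENNReal.add_le_add_iff_left (hv.eVariationOn_ne_top hf01 hv01),
      ENNReal.mul_le_mul_iff_right (ENNReal.ofReal_pos.2 hlam).ne' ENNReal.ofReal_ne_top,
      fidelity_eq_ofReal_integral hf01 hf hvm hv01 hc₁ hc₂,
      fidelity_eq_ofReal_integral hf01 hf hvm hv01 hd₁ hd₂, ENNReal.ofReal_le_ofReal_iff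
        (add_nonneg (integral_nonneg fun x ↦ mul_nonneg (hv01 x).1 (sq_nonneg _))
          (integral_nonneg fun x ↦ mul_nonneg (hv01' x).1 (sq_nonneg _)))] at h
  refine ⟨integral_mul_eq_mul_integral_of_isMinOn ?_ (ae_of_all _ fun x ↦ (hv01 x).1)
      hf.aestronglyMeasurable hfae (isMinOn_iff.2 fun d hd ↦ by linarith [hopt d hd c₂ hc₂]),
    integral_mul_eq_mul_integral_of_isMinOn ?_ (ae_of_all _ fun x ↦ (hv01' x).1)
      hf.aestronglyMeasurable hfae (isMinOn_iff.2 fun d hd ↦ by linarith [hopt c₁ hc₁ d hd])⟩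
  · exact memLp_one_iff_integrable.1 (memLp_of_ae_mem_Icc 1 hvm (ae_of_all _ hv01))
  · exact memLp_one_iff_integrable.1 (memLp_of_ae_mem_Icc 1 (by fun_prop) (ae_of_all _ hv01'))

end ChanVese

theorem stmt18_general (lam : ℝ) (hlam : 0 < lam) (f : ℝ → ℝ)
    (hfBV : BoundedVariationOn f (Ioo 0 1))
    (hf01 : ∀ x ∈ Ioo (0:ℝ) 1, f x ∈ Icc (0:ℝ) 1)
    (u : ℝ → ℝ) (c₁ c₂ : ℝ) (hc₁ : c₁ ∈ Icc (0:ℝ) 1) (hc₂ : c₂ ∈ Icc (0:ℝ) 1)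
    (hu : MemLp u 2 (volume.restrict (Ioo (0:ℝ) 1)))
    (hmin : ∀ (u' : ℝ → ℝ) (d₁ d₂ : ℝ), MemLp u' 2 (volume.restrict (Ioo (0:ℝ) 1)) →
      d₁ ∈ Icc (0:ℝ) 1 → d₂ ∈ Icc (0:ℝ) 1 → Fcv lam f u c₁ c₂ ≤ Fcv lam f u' d₁ d₂) :
    (∃ k : ℝ, ∀ᵐ x ∂(volume.restrict (Ioo (0:ℝ) 1)), u x = k) ∨
      (∀ᵐ x ∂(volume.restrict (Ioo (0:ℝ) 1)), u x = 0 ∨ u x = 1) := by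
  have hf : AEMeasurable f μ₀₁ := hfBV.aemeasurable_restrict measurableSet_Ioo
  rcases eq_or_ne c₁ c₂ with rfl | hc
  · exact .inl (IsFcvMinimizer.ae_eq_const hf01 hmin hc₁)
  obtain ⟨w, hw01, hwu, hwmin⟩ :=
    IsFcvMinimizer.exists_mem_Icc hf01 hmin hu.aestronglyMeasurable.aemeasurable
  have hwm : AEMeasurable w μ₀₁ := hu.aestronglyMeasurable.aemeasurable.congr hwu.symm
  have hmeans : ∀ᵐ t ∂μ₀₁, HasWeightedMeans μ₀₁ f (superlevelIndicator w t) c₁ c₂ :=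
    (hwmin.ae_superlevelIndicator hf01 hf hwm hw01 hc₁ hc₂).mono fun t ht ↦
      ht.hasWeightedMeans hf01 hlam hf (hwm.superlevelIndicator t)
        (superlevelIndicator_mem_Icc w t) hc₁ hc₂
  have hfint : Integrable f μ₀₁ := memLp_one_iff_integrable.1
    (memLp_of_ae_mem_Icc 1 hf (ae_restrict_of_forall_mem measurableSet_Ioo hf01))
  refine .inr ?_
  filter_upwards [ae_eq_zero_or_one_of_ae_hasWeightedMeans hwm hfint hc (ae_of_all _ hw01) hmeans,
    hwu] with x hx hxu
  rwa [← hxu]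

/-- Theorem 2: let `f ∈ BV(0,1)`, `0 ≤ f ≤ 1`, satisfy hypothesis (H): for
every `c ∈ (0,1)`, the topological boundary of `{x ∈ (0,1) ∖ J_f : f(x) = c}` is
Lebesgue-null (here `J_f` is the set of discontinuity points of `f` in `(0,1)`). If
`(u, c₁, c₂)` minimizes `F` jointly over `u ∈ L²(0,1)` and constants `c₁, c₂ ∈ [0,1]`,
then either `u` is constant a.e. or `u` is a binary function a.e. -/
theorem stmt18 (lam : ℝ) (hlam : 0 < lam) (f : ℝ → ℝ)
    (hfBV : BoundedVariationOn f (Ioo 0 1))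
    (hf01 : ∀ x ∈ Ioo (0:ℝ) 1, f x ∈ Icc (0:ℝ) 1)
    (hH : ∀ c ∈ Ioo (0:ℝ) 1,
      volume (frontier {x | x ∈ Ioo (0:ℝ) 1 ∧ ContinuousAt f x ∧ f x = c}) = 0)
    (u : ℝ → ℝ) (c₁ c₂ : ℝ) (hc₁ : c₁ ∈ Icc (0:ℝ) 1) (hc₂ : c₂ ∈ Icc (0:ℝ) 1)
    (hu : MemLp u 2 (volume.restrict (Ioo (0:ℝ) 1)))
    (hmin : ∀ (u' : ℝ → ℝ) (d₁ d₂ : ℝ), MemLp u' 2 (volume.restrict (Ioo (0:ℝ) 1)) →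
      d₁ ∈ Icc (0:ℝ) 1 → d₂ ∈ Icc (0:ℝ) 1 → Fcv lam f u c₁ c₂ ≤ Fcv lam f u' d₁ d₂) :
    (∃ k : ℝ, ∀ᵐ x ∂(volume.restrict (Ioo (0:ℝ) 1)), u x = k) ∨
      (∀ᵐ x ∂(volume.restrict (Ioo (0:ℝ) 1)), u x = 0 ∨ u x = 1) :=
  stmt18_general lam hlam f hfBV hf01 u c₁ c₂ hc₁ hc₂ hu hmin
end
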